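/- arXiv:0811.3771 — 5 statements merged into one kernel-verified Lean document; each statement's English description precedes it below -/
import Mathlib

section
/- Let n ≥ 1 and let a, b, a', b' ∈ {0,1}^n. Define f(a,b,a',b') = (a·b') + (a'·b) mod 2, where (u,v) = Σ_j u_j v_j mod 2. Then the Pauli strings S_{ab} and S_{a'b'} commute (S_{ab}S_{a'b'} = S_{a'b'}S_{ab}) if f(a,b,a',b') = 0, and anticommute (S_{ab}S_{a'b'} = −S_{a'b'}S_{ab}) if f(a,b,a',b') = 1. -/
open scoped BigOperators

/-- Single-qubit Pauli operator `X^a Z^b`, with indices in `ZMod 2`: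
`(X^a Z^b)_{i j} = δ_{i, j+a} · (-1)^{b·j}`. -/
def pauliXZ (a b : ZMod 2) : Matrix (ZMod 2) (ZMod 2) ℂ :=
  fun i j => if i = j + a then (-1 : ℂ) ^ (b * j).val else 0

/-- Pauli string `S_{ab} = X^{a_1}Z^{b_1} ⊗ ⋯ ⊗ X^{a_n}Z^{b_n}`, realized entrywise
(the Kronecker product of matrices has entries given by products of entries)
on the index set `Fin n → ZMod 2`, of cardinality `2^n`. -/
def pauliString (n : ℕ) (a b : Fin n → ZMod 2) :
    Matrix (Fin n → ZMod 2) (Fin n → ZMod 2) ℂ :=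
  fun i j => ∏ t, pauliXZ (a t) (b t) (i t) (j t)

/-! The single-qubit Paulis satisfy `X^a Z^b · X^a' Z^b' = (-1)^(a'b) X^(a+a') Z^(b+b')`, since
moving `Z^b` past `X^a'` costs the sign `(-1)^(a'b)`. A Pauli string is a tensor product, so it
multiplies factorwise and `S_ab S_a'b' = (-1)^(a'·b) S_(a+a')(b+b')`. Comparing with the product in
the other order, the two differ by `(-1)^(a·b' + a'·b)`. -/

section Sign

variable {R : Type*}

lemma neg_one_pow_val_add [Ring R] (x y : ZMod 2) :
    (-1 : R) ^ (x + y).val = (-1) ^ x.val * (-1) ^ y.val := by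
  rw [ZMod.val_add, ← pow_add, ← neg_one_pow_eq_pow_mod_two]

lemma neg_one_pow_val_sum [CommRing R] {ι : Type*} (s : Finset ι) (f : ι → ZMod 2) :
    (-1 : R) ^ (∑ t ∈ s, f t).val = ∏ t ∈ s, (-1 : R) ^ (f t).val := by
  induction s using Finset.cons_induction with
  | empty => simp
  | cons i s hi ih => rw [Finset.sum_cons, Finset.prod_cons, neg_one_pow_val_add, ih]

lemma neg_one_pow_val_mul_self [Ring R] (x : ZMod 2) : (-1 : R) ^ x.val * (-1) ^ x.val = 1 := by
  rw [← pow_add, ← two_mul, pow_mul, neg_one_sq, one_pow]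

end Sign

lemma Matrix.sum_prod_mul_prod_eq_prod_mul_apply {ι α β γ R : Type*} [Fintype ι] [DecidableEq ι]
    [Fintype β] [CommSemiring R] (A : ι → Matrix α β R) (B : ι → Matrix β γ R)
    (i : ι → α) (k : ι → γ) :
    ∑ j : ι → β, (∏ t, A t (i t) (j t)) * ∏ t, B t (j t) (k t) =
      ∏ t, (A t * B t) (i t) (k t) := by
  simp only [Matrix.mul_apply, Fintype.prod_sum, Finset.prod_mul_distrib]

lemma pauliXZ_mul (a b a' b' : ZMod 2) :
    pauliXZ a b * pauliXZ a' b' =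
      ((-1 : ℂ) ^ (a' * b).val) • pauliXZ (a + a') (b + b') := by
  ext i j
  simp only [Matrix.mul_apply, pauliXZ, Matrix.smul_apply, smul_eq_mul,
    ite_mul, mul_ite, zero_mul, mul_zero, Finset.sum_ite_eq', Finset.mem_univ, if_true]
  rw [show j + a' + a = j + (a + a') by ring]
  split_ifs
  · rw [show b * (j + a') = a' * b + b * j by ring, show (b + b') * j = b * j + b' * j by ring,
      neg_one_pow_val_add, neg_one_pow_val_add]
    ring
  · rfl

lemma pauliString_mul (n : ℕ) (a b a' b' : Fin n → ZMod 2) :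
    pauliString n a b * pauliString n a' b' =
      ((-1 : ℂ) ^ (∑ t, a' t * b t).val) • pauliString n (a + a') (b + b') := by
  ext i j
  rw [Matrix.mul_apply]
  simp only [pauliString]
  rw [Matrix.sum_prod_mul_prod_eq_prod_mul_apply]
  simp only [pauliXZ_mul, Matrix.smul_apply, smul_eq_mul, Finset.prod_mul_distrib,
    neg_one_pow_val_sum]
  rfl

lemma pauliString_mul_eq_smul_mul_swap (n : ℕ) (a b a' b' : Fin n → ZMod 2) :
    pauliString n a b * pauliString n a' b' =
      ((-1 : ℂ) ^ (∑ t, (a t * b' t + a' t * b t)).val) •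
        (pauliString n a' b' * pauliString n a b) := by
  rw [pauliString_mul, pauliString_mul n a' b', add_comm a', add_comm b', smul_smul,
    Finset.sum_add_distrib, neg_one_pow_val_add, mul_right_comm, neg_one_pow_val_mul_self, one_mul]

theorem pauliString_commute_or_anticommute_general
    (n : ℕ) (a b a' b' : Fin n → ZMod 2) :
    ((∑ t, (a t * b' t + a' t * b t)) = 0 →
      pauliString n a b * pauliString n a' b' = pauliString n a' b' * pauliString n a b) ∧
    ((∑ t, (a t * b' t + a' t * b t)) = 1 →
      pauliString n a b * pauliString n a' b' = -(pauliString n a' b' * pauliString n a b)) := by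
  refine ⟨fun h => ?_, fun h => ?_⟩ <;> rw [pauliString_mul_eq_smul_mul_swap, h]
  · rw [ZMod.val_zero, pow_zero, one_smul]
  · rw [ZMod.val_one, pow_one, neg_one_smul]

/-- If `f(a,b,a',b') = (a,b') + (a',b) = 0 (mod 2)` then `S_{ab}` and `S_{a'b'}` commute,
and if `f(a,b,a',b') = 1 (mod 2)` then they anticommute. -/
theorem pauliString_commute_or_anticommute
    (n : ℕ) (hn : 1 ≤ n) (a b a' b' : Fin n → ZMod 2) :
    ((∑ t, (a t * b' t + a' t * b t)) = 0 →
      pauliString n a b * pauliString n a' b' = pauliString n a' b' * pauliString n a b) ∧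
    ((∑ t, (a t * b' t + a' t * b t)) = 1 →
      pauliString n a b * pauliString n a' b' = -(pauliString n a' b' * pauliString n a b)) :=
  pauliString_commute_or_anticommute_general n a b a' b'
end

section
/- Let n ≥ 1 and let Γ_1, …, Γ_m be pairwise distinct 2^n×2^n complex matrices such that each Γ_j is Hermitian with Γ_j² = I, and Γ_j Γ_k = −Γ_k Γ_j whenever j ≠ k. Then m ≤ 2n + 1. -/
/-!
For `S ⊆ {1, …, m-1}` let `Γ_S` be the product of the `Γ j`, `j ∈ S`. Each `Γ_S` squares to `±1`,
so `tr (Γ_S Γ_S) = ±N ≠ 0`. For `S ≠ T` some `Γ j` anticommutes with `Γ_S Γ_T` — namely `Γ 0` if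
`|S| + |T|` is odd and any `j ∈ S ∆ T` otherwise — and since `Γ j² = 1` this forces
`tr (Γ_S Γ_T) = 0`. So the `2^(m-1)` matrices `Γ_S` are orthogonal for the trace form, hence
linearly independent in a space of dimension `4^n`, and `m - 1 ≤ 2n`.
-/

open Finset

section Ring

variable {R ι : Type*} [Ring R] [DecidableEq ι]

theorem mul_list_prod_map_of_anticomm {Γ : ι → R}
    (hanti : ∀ j k, j ≠ k → Γ j * Γ k = -(Γ k * Γ j)) (j : ι) (l : List ι) :
    Γ j * (l.map Γ).prod = ((-1 : ℤ) ^ l.countP (· ≠ j)) • ((l.map Γ).prod * Γ j) := by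
  induction l with
  | nil => simp
  | cons a t ih =>
    rcases eq_or_ne a j with rfl | haj
    · rw [List.map_cons, List.prod_cons, List.countP_cons_of_neg (by simp)]
      conv_lhs => rw [ih]
      rw [mul_smul_comm, mul_assoc]
    · rw [List.map_cons, List.prod_cons, List.countP_cons_of_pos (by simpa using haj), pow_succ,
        ← mul_assoc, hanti j a haj.symm, neg_mul, mul_assoc, ih, mul_smul_comm, mul_comm, mul_smul,
        neg_one_smul, mul_assoc]

theorem list_prod_map_mul_self_of_anticomm {Γ : ι → R} (hsq : ∀ j, Γ j * Γ j = 1)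
    (hanti : ∀ j k, j ≠ k → Γ j * Γ k = -(Γ k * Γ j)) (l : List ι) :
    (l.map Γ).prod * (l.map Γ).prod = 1 ∨ (l.map Γ).prod * (l.map Γ).prod = -1 := by
  induction l with
  | nil => simp
  | cons a t ih =>
    set P := (t.map Γ).prod
    set s := (-1 : ℤ) ^ t.countP (· ≠ a)
    have hs : s * s = 1 := by rw [← pow_add, ← two_mul, pow_mul]; simp
    have hcomm : P * Γ a = s • (Γ a * P) := by
      rw [mul_list_prod_map_of_anticomm hanti, smul_smul, hs, one_smul]
    have hsq' : (Γ a * P) * (Γ a * P) = s • (P * P) := by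
      rw [mul_assoc, ← mul_assoc P, hcomm, smul_mul_assoc, mul_smul_comm, ← mul_assoc, ← mul_assoc,
        hsq, one_mul]
    rw [List.map_cons, List.prod_cons, hsq']
    rcases neg_one_pow_eq_or ℤ (t.countP (· ≠ a)) with h | h <;> rcases ih with h' | h' <;>
      simp [s, h, h']

noncomputable def cliffordMonomial (Γ : ι → R) (S : Finset ι) : R := (S.toList.map Γ).prod

theorem mul_cliffordMonomial_of_anticomm {Γ : ι → R}
    (hanti : ∀ j k, j ≠ k → Γ j * Γ k = -(Γ k * Γ j)) (j : ι) (S : Finset ι) :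
    Γ j * cliffordMonomial Γ S = ((-1 : ℤ) ^ #(S.erase j)) • (cliffordMonomial Γ S * Γ j) := by
  have hcount : S.toList.countP (· ≠ j) = #(S.erase j) := by
    rw [← Multiset.coe_countP, Finset.coe_toList, Multiset.countP_eq_card_filter,
      ← Finset.filter_val, Finset.filter_ne']
    rfl
  rw [cliffordMonomial, mul_list_prod_map_of_anticomm hanti, hcount]

theorem cliffordMonomial_mul_self_of_anticomm {Γ : ι → R} (hsq : ∀ j, Γ j * Γ j = 1)
    (hanti : ∀ j k, j ≠ k → Γ j * Γ k = -(Γ k * Γ j)) (S : Finset ι) :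
    cliffordMonomial Γ S * cliffordMonomial Γ S = 1 ∨
      cliffordMonomial Γ S * cliffordMonomial Γ S = -1 :=
  list_prod_map_mul_self_of_anticomm hsq hanti S.toList

end Ring

theorem Finset.exists_odd_card_erase_add_card_erase {ι : Type*} [DecidableEq ι] {S T : Finset ι}
    (hST : S ≠ T) {j₀ : ι} (hS : j₀ ∉ S) (hT : j₀ ∉ T) :
    ∃ j, Odd (#(S.erase j) + #(T.erase j)) := by
  rcases Nat.even_or_odd (#S + #T) with ⟨c, hc⟩ | hodd
  · obtain ⟨j, hj⟩ := symmDiff_nonempty.mpr hST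
    refine ⟨j, c - 1, ?_⟩
    rcases Finset.mem_symmDiff.mp hj with ⟨hjS, hjT⟩ | ⟨hjT, hjS⟩
    · rw [card_erase_of_mem hjS, erase_eq_of_notMem hjT]
      have := card_pos.mpr ⟨j, hjS⟩
      omega
    · rw [card_erase_of_mem hjT, erase_eq_of_notMem hjS]
      have := card_pos.mpr ⟨j, hjT⟩
      omega
  · exact ⟨j₀, by rwa [erase_eq_of_notMem hS, erase_eq_of_notMem hT]⟩

namespace Matrix

variable {K n ι : Type*} [Field K] [Fintype n] [DecidableEq n]

theorem trace_eq_zero_of_mul_eq_neg_mul [CharZero K] {A M : Matrix n n K} (hA : A * A = 1)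
    (h : A * M = -(M * A)) : M.trace = 0 := by
  have : M.trace = -M.trace := by
    calc M.trace = (A * (M * A)).trace := by rw [trace_mul_comm, mul_assoc, hA, mul_one]
      _ = -M.trace := by rw [← mul_assoc, h, neg_mul, trace_neg, mul_assoc, hA, mul_one]
  exact CharZero.eq_neg_self_iff.mp this

theorem linearIndependent_of_trace_mul {v : ι → Matrix n n K}
    (hne : ∀ i j, i ≠ j → (v i * v j).trace = 0) (hself : ∀ i, (v i * v i).trace ≠ 0) :
    LinearIndependent K v :=
  LinearMap.BilinForm.linearIndependent_of_iIsOrtho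
    (B := (LinearMap.mul K (Matrix n n K)).compr₂ (traceLinearMap n K K))
    (LinearMap.BilinForm.iIsOrtho_def.mpr hne) hself

end Matrix

section CliffordMatrices

variable {K n : Type*} [Field K] [CharZero K] [Fintype n] [DecidableEq n]

theorem trace_cliffordMonomial_mul_of_ne {ι : Type*} [DecidableEq ι] {Γ : ι → Matrix n n K}
    (hsq : ∀ j, Γ j * Γ j = 1) (hanti : ∀ j k, j ≠ k → Γ j * Γ k = -(Γ k * Γ j))
    {S T : Finset ι} (hST : S ≠ T) {j₀ : ι} (hS : j₀ ∉ S) (hT : j₀ ∉ T) :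
    (cliffordMonomial Γ S * cliffordMonomial Γ T).trace = 0 := by
  obtain ⟨j, hodd⟩ := exists_odd_card_erase_add_card_erase hST hS hT
  refine Matrix.trace_eq_zero_of_mul_eq_neg_mul (hsq j) ?_
  rw [← mul_assoc, mul_cliffordMonomial_of_anticomm hanti, smul_mul_assoc, mul_assoc,
    mul_cliffordMonomial_of_anticomm hanti, mul_smul_comm, smul_smul, ← pow_add, hodd.neg_one_pow,
    neg_one_smul, mul_assoc]

theorem trace_cliffordMonomial_mul_self_ne_zero [Nonempty n] {ι : Type*} [DecidableEq ι]
    {Γ : ι → Matrix n n K} (hsq : ∀ j, Γ j * Γ j = 1)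
    (hanti : ∀ j k, j ≠ k → Γ j * Γ k = -(Γ k * Γ j)) (S : Finset ι) :
    (cliffordMonomial Γ S * cliffordMonomial Γ S).trace ≠ 0 := by
  rcases cliffordMonomial_mul_self_of_anticomm hsq hanti S with h | h <;> simp [h]

theorem linearIndependent_cliffordMonomial_map_succ [Nonempty n] {k : ℕ}
    {Γ : Fin (k + 1) → Matrix n n K} (hsq : ∀ j, Γ j * Γ j = 1)
    (hanti : ∀ i j, i ≠ j → Γ i * Γ j = -(Γ j * Γ i)) :
    LinearIndependent K fun S : Finset (Fin k) ↦ cliffordMonomial Γ (S.map (Fin.succEmb k)) := by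
  have hzero (S : Finset (Fin k)) : 0 ∉ S.map (Fin.succEmb k) := by simp [Fin.succ_ne_zero]
  refine Matrix.linearIndependent_of_trace_mul (fun S T hST ↦ ?_)
    (fun S ↦ trace_cliffordMonomial_mul_self_ne_zero hsq hanti _)
  exact trace_cliffordMonomial_mul_of_ne hsq hanti ((map_injective _).ne hST) (hzero S) (hzero T)

theorem two_pow_le_card_sq_of_anticomm [Nonempty n] {k : ℕ} {Γ : Fin (k + 1) → Matrix n n K}
    (hsq : ∀ j, Γ j * Γ j = 1) (hanti : ∀ i j, i ≠ j → Γ i * Γ j = -(Γ j * Γ i)) :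
    2 ^ k ≤ Fintype.card n ^ 2 := by
  simpa [Module.finrank_matrix, sq] using
    (linearIndependent_cliffordMonomial_map_succ hsq hanti).fintype_card_le_finrank

end CliffordMatrices

theorem card_anticommuting_hermitian_involutions_le_general
    (n m : ℕ)
    (Γ : Fin m → Matrix (Fin (2 ^ n)) (Fin (2 ^ n)) ℂ)
    (hsq : ∀ j, Γ j * Γ j = 1)
    (hanti : ∀ j k, j ≠ k → Γ j * Γ k = -(Γ k * Γ j)) :
    m ≤ 2 * n + 1 := by
  obtain _ | k := m
  · omega
  have h : 2 ^ k ≤ 2 ^ (2 * n) := by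
    simpa [← pow_mul, mul_comm] using two_pow_le_card_sq_of_anticomm hsq hanti
  have := (Nat.pow_le_pow_iff_right (by norm_num : 1 < 2)).mp h
  omega

/-- Any family of pairwise distinct, pairwise anticommuting Hermitian involutions
on `ℂ^(2^n)` has at most `2n + 1` members. -/
theorem card_anticommuting_hermitian_involutions_le
    (n m : ℕ) (hn : 1 ≤ n)
    (Γ : Fin m → Matrix (Fin (2 ^ n)) (Fin (2 ^ n)) ℂ)
    (hdist : Function.Injective Γ)
    (hherm : ∀ j, (Γ j).IsHermitian)
    (hsq : ∀ j, Γ j * Γ j = 1)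
    (hanti : ∀ j k, j ≠ k → Γ j * Γ k = -(Γ k * Γ j)) :
    m ≤ 2 * n + 1 :=
  card_anticommuting_hermitian_involutions_le_general n m Γ hsq hanti
end

section
/- Let d ≥ 1, let Γ_1, …, Γ_m be d×d complex Hermitian matrices with Γ_j² = I for all j and Γ_j Γ_k = −Γ_k Γ_j for all j ≠ k, and let ρ be a d×d positive semidefinite Hermitian matrix with Tr(ρ) = 1. Then Σ_{j=1}^m (Tr(Γ_j ρ))² ≤ 1. -/
open scoped BigOperators ComplexOrder
open Matrix

/-!
Put `c j = Tr(Γ j ρ)` and `A = ∑ j, c j • Γ j`. The anticommutation relations make all cross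
terms of `A * A` cancel, so `A * A = s • 1` with `s = ∑ j, c j ^ 2`, while `Tr(A ρ) = s`.
The variance `Tr(A² ρ) - Tr(A ρ)²` of the observable `A` in the state `ρ` is nonnegative,
which here reads `s - s ^ 2 ≥ 0`, i.e. `s ≤ 1`.
-/

section Anticommuting

variable {ι R S : Type*} [CommSemiring S] [Ring R] [Algebra S R] {Γ : ι → R}

theorem anticommutator_sum_smul_eq_zero
    (hanti : ∀ j k, j ≠ k → Γ j * Γ k = -(Γ k * Γ j)) (c : ι → S) {s : Finset ι} {i : ι}
    (hi : i ∉ s) : Γ i * ∑ j ∈ s, c j • Γ j + (∑ j ∈ s, c j • Γ j) * Γ i = 0 := by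
  rw [Finset.mul_sum, Finset.sum_mul, ← Finset.sum_add_distrib]
  refine Finset.sum_eq_zero fun j hj => ?_
  rw [mul_smul_comm, smul_mul_assoc, ← smul_add, hanti i j (ne_of_mem_of_not_mem hj hi).symm,
    neg_add_cancel, smul_zero]

theorem sum_smul_mul_self_of_anticommute (hsq : ∀ j, Γ j * Γ j = 1)
    (hanti : ∀ j k, j ≠ k → Γ j * Γ k = -(Γ k * Γ j)) (c : ι → S) (s : Finset ι) :
    (∑ j ∈ s, c j • Γ j) * (∑ j ∈ s, c j • Γ j) = (∑ j ∈ s, c j ^ 2) • 1 := by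
  classical
  induction s using Finset.induction_on with
  | empty => simp
  | insert i s hi ih =>
    have hcross := anticommutator_sum_smul_eq_zero hanti c hi
    set A := ∑ j ∈ s, c j • Γ j
    rw [Finset.sum_insert hi, Finset.sum_insert hi, add_smul, ← ih]
    calc (c i • Γ i + A) * (c i • Γ i + A)
        = c i ^ 2 • (Γ i * Γ i) + c i • (Γ i * A + A * Γ i) + A * A := by
          simp only [add_mul, mul_add, smul_mul_assoc, mul_smul_comm, smul_add]
          rw [sq, mul_smul]
          abel
      _ = c i ^ 2 • 1 + A * A := by rw [hsq, hcross, smul_zero, add_zero]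

end Anticommuting

section Variance

variable {n 𝕜 : Type*} [Fintype n] [DecidableEq n] [RCLike 𝕜]

theorem Matrix.PosSemidef.re_trace_mul_sq_le {ρ A : Matrix n n 𝕜} (hρ : ρ.PosSemidef)
    (htr : ρ.trace = 1) (hA : A.IsHermitian) :
    RCLike.re (A * ρ).trace ^ 2 ≤ RCLike.re (A * A * ρ).trace := by
  set t := RCLike.re (A * ρ).trace
  set M := A - t • (1 : Matrix n n 𝕜)
  have hM : M.IsHermitian := hA.sub (isHermitian_one.smul (IsSelfAdjoint.all t))
  have hvar : 0 ≤ RCLike.re (M * M * ρ).trace := by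
    have := (hρ.mul_mul_conjTranspose_same M).trace_nonneg
    rw [hM.eq, trace_mul_cycle] at this
    exact (RCLike.nonneg_iff.mp this).1
  have hexpand : M * M * ρ = A * A * ρ - (2 * t) • (A * ρ) + t ^ 2 • ρ := by
    simp only [M, sub_mul, mul_sub, smul_mul_assoc, mul_smul_comm, one_mul, mul_one, smul_sub]
    module
  rw [hexpand, trace_add, trace_sub, trace_smul, trace_smul, htr] at hvar
  simp only [map_add, map_sub, RCLike.smul_re, RCLike.one_re, mul_one] at hvar
  nlinarith

end Variance

theorem uncertainty_relation_anticommuting_observables_general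
    (d m : ℕ)
    (Γ : Fin m → Matrix (Fin d) (Fin d) ℂ)
    (hherm : ∀ j, (Γ j).IsHermitian)
    (hsq : ∀ j, Γ j * Γ j = 1)
    (hanti : ∀ j k, j ≠ k → Γ j * Γ k = -(Γ k * Γ j))
    (ρ : Matrix (Fin d) (Fin d) ℂ)
    (hρ : ρ.PosSemidef) (htr : ρ.trace = 1) :
    ∑ j, ((Γ j * ρ).trace.re) ^ 2 ≤ 1 := by
  set c : Fin m → ℝ := fun j => (Γ j * ρ).trace.re
  set s := ∑ j, c j ^ 2
  set A := ∑ j, c j • Γ j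
  have hA : A.IsHermitian := isSelfAdjoint_sum _ fun j _ => (hherm j).smul (IsSelfAdjoint.all _)
  have hAρ : (A * ρ).trace.re = s := by
    simp only [A, s, Finset.sum_mul, trace_sum, smul_mul_assoc, trace_smul, Complex.re_sum,
      Complex.real_smul, Complex.re_ofReal_mul, sq]
    rfl
  have hAAρ : (A * A * ρ).trace.re = s := by
    rw [sum_smul_mul_self_of_anticommute hsq hanti, smul_mul_assoc, one_mul, trace_smul, htr,
      Complex.smul_re, Complex.one_re, smul_eq_mul, mul_one]
  have hvar := hρ.re_trace_mul_sq_le htr hA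
  rw [RCLike.re_to_complex, RCLike.re_to_complex, hAρ, hAAρ] at hvar
  have hs : 0 ≤ s := Finset.sum_nonneg fun j _ => sq_nonneg (c j)
  nlinarith

/-- The uncertainty relation for anti-commuting observables: if `Γ_1, …, Γ_m` are
Hermitian involutions that pairwise anticommute, and `ρ` is a state (a positive
semidefinite matrix of trace 1), then `Σ_j (Tr(Γ_j ρ))² ≤ 1`.  (The trace
`Tr(Γ_j ρ)` is real since `Γ_j` and `ρ` are Hermitian, so we take its real part.) -/
theorem uncertainty_relation_anticommuting_observables
    (d m : ℕ) (hd : 1 ≤ d)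
    (Γ : Fin m → Matrix (Fin d) (Fin d) ℂ)
    (hherm : ∀ j, (Γ j).IsHermitian)
    (hsq : ∀ j, Γ j * Γ j = 1)
    (hanti : ∀ j k, j ≠ k → Γ j * Γ k = -(Γ k * Γ j))
    (ρ : Matrix (Fin d) (Fin d) ℂ)
    (hρ : ρ.PosSemidef) (htr : ρ.trace = 1) :
    ∑ j, ((Γ j * ρ).trace.re) ^ 2 ≤ 1 :=
  uncertainty_relation_anticommuting_observables_general d m Γ hherm hsq hanti ρ hρ htr
end

section
/- Let p ≥ 1 be a real number and let m_1, m_2, m_3, m_4 be real numbers satisfying |m_1|^p + |m_2|^p ≤ 1, |m_1|^p + |m_3|^p ≤ 1, |m_2|^p + |m_4|^p ≤ 1, and |m_3|^p + |m_4|^p ≤ 1. Then m_1 + m_2 + m_3 − m_4 ≤ 4 · 2^{−1/p}. Moreover, equality is attained at m_1 = m_2 = m_3 = 2^{−1/p}, m_4 = −2^{−1/p}. -/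
/-!
By convexity of `t ↦ t ^ p` (`p ≥ 1`), a pair with `|a| ^ p + |b| ^ p ≤ 1` has
`((|a| + |b|) / 2) ^ p ≤ 1 / 2`, so `a + b ≤ 2 · 2^{-1/p}`. The CHSH expression splits into
the two constrained pairs `(m₁, m₂)` and `(m₃, -m₄)`, and the symmetric point
`|mᵢ| = 2^{-1/p}` makes every constraint tight.
-/

open Real

lemma rpow_neg_one_div_rpow {x : ℝ} (hx : 0 ≤ x) {p : ℝ} (hp : p ≠ 0) :
    (x ^ (-(1 / p))) ^ p = x⁻¹ := by
  rw [← rpow_mul hx, neg_mul, one_div_mul_cancel hp, rpow_neg_one]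

lemma abs_add_abs_div_two_rpow_le {p : ℝ} (hp : 1 ≤ p) (a b : ℝ) :
    ((|a| + |b|) / 2) ^ p ≤ (|a| ^ p + |b| ^ p) / 2 := by
  have h := (convexOn_rpow hp).2 (abs_nonneg a) (abs_nonneg b)
    (by norm_num : (0 : ℝ) ≤ 1 / 2) (by norm_num : (0 : ℝ) ≤ 1 / 2) (by norm_num)
  simp only [smul_eq_mul] at h
  calc ((|a| + |b|) / 2) ^ p = (1 / 2 * |a| + 1 / 2 * |b|) ^ p := by ring_nf
    _ ≤ 1 / 2 * |a| ^ p + 1 / 2 * |b| ^ p := h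
    _ = (|a| ^ p + |b| ^ p) / 2 := by ring

lemma add_le_of_abs_rpow_add_abs_rpow_le_one {p : ℝ} (hp : 1 ≤ p) {a b : ℝ}
    (h : |a| ^ p + |b| ^ p ≤ 1) : a + b ≤ 2 * (2 : ℝ) ^ (-(1 / p)) := by
  have hp0 : 0 < p := zero_lt_one.trans_le hp
  have hmean : 0 ≤ (|a| + |b|) / 2 := by positivity
  have hmean_rpow : ((|a| + |b|) / 2) ^ p ≤ ((2 : ℝ) ^ (-(1 / p))) ^ p := by
    rw [rpow_neg_one_div_rpow zero_le_two hp0.ne']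
    linarith [abs_add_abs_div_two_rpow_le hp a b]
  have hmean_le : (|a| + |b|) / 2 ≤ (2 : ℝ) ^ (-(1 / p)) :=
    (rpow_le_rpow_iff hmean (by positivity) hp0).1 hmean_rpow
  linarith [le_abs_self a, le_abs_self b]

theorem chsh_bound_p_theory_general
    (p : ℝ) (hp : 1 ≤ p) (m₁ m₂ m₃ m₄ : ℝ)
    (h12 : |m₁| ^ p + |m₂| ^ p ≤ 1)
    (h34 : |m₃| ^ p + |m₄| ^ p ≤ 1) :
    m₁ + m₂ + m₃ - m₄ ≤ 4 * (2 : ℝ) ^ (-(1 / p)) ∧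
    (|(2 : ℝ) ^ (-(1 / p))| ^ p + |(2 : ℝ) ^ (-(1 / p))| ^ p ≤ 1 ∧
     |(2 : ℝ) ^ (-(1 / p))| ^ p + |(2 : ℝ) ^ (-(1 / p))| ^ p ≤ 1 ∧
     |(2 : ℝ) ^ (-(1 / p))| ^ p + |-((2 : ℝ) ^ (-(1 / p)))| ^ p ≤ 1 ∧
     |(2 : ℝ) ^ (-(1 / p))| ^ p + |-((2 : ℝ) ^ (-(1 / p)))| ^ p ≤ 1 ∧
     (2 : ℝ) ^ (-(1 / p)) + (2 : ℝ) ^ (-(1 / p)) + (2 : ℝ) ^ (-(1 / p)) -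
       (-((2 : ℝ) ^ (-(1 / p)))) = 4 * (2 : ℝ) ^ (-(1 / p))) := by
  have hpair₁₂ := add_le_of_abs_rpow_add_abs_rpow_le_one hp h12
  have hpair₃₄ := add_le_of_abs_rpow_add_abs_rpow_le_one hp (a := m₃) (b := -m₄) (by rwa [abs_neg])
  have htight : |(2 : ℝ) ^ (-(1 / p))| ^ p = 2⁻¹ := by
    rw [abs_of_nonneg (by positivity), rpow_neg_one_div_rpow zero_le_two (by linarith)]
  rw [abs_neg, htight]
  exact ⟨by linarith, by norm_num, by norm_num, by norm_num, by norm_num, by ring⟩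

/-- The maximal CHSH value in a `p`-theory: if the four expectation values satisfy
the relaxed `p`-norm uncertainty constraints `|m_i|^p + |m_j|^p ≤ 1` for each
anticommuting pair, then `m₁ + m₂ + m₃ − m₄ ≤ 4·2^{−1/p}`; equality is attained at
`m₁ = m₂ = m₃ = 2^{−1/p}`, `m₄ = −2^{−1/p}`.  (Here `^` on reals is `Real.rpow`.) -/
theorem chsh_bound_p_theory
    (p : ℝ) (hp : 1 ≤ p) (m₁ m₂ m₃ m₄ : ℝ)
    (h12 : |m₁| ^ p + |m₂| ^ p ≤ 1) (h13 : |m₁| ^ p + |m₃| ^ p ≤ 1)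
    (h24 : |m₂| ^ p + |m₄| ^ p ≤ 1) (h34 : |m₃| ^ p + |m₄| ^ p ≤ 1) :
    m₁ + m₂ + m₃ - m₄ ≤ 4 * (2 : ℝ) ^ (-(1 / p)) ∧
    (|(2 : ℝ) ^ (-(1 / p))| ^ p + |(2 : ℝ) ^ (-(1 / p))| ^ p ≤ 1 ∧
     |(2 : ℝ) ^ (-(1 / p))| ^ p + |(2 : ℝ) ^ (-(1 / p))| ^ p ≤ 1 ∧
     |(2 : ℝ) ^ (-(1 / p))| ^ p + |-((2 : ℝ) ^ (-(1 / p)))| ^ p ≤ 1 ∧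
     |(2 : ℝ) ^ (-(1 / p))| ^ p + |-((2 : ℝ) ^ (-(1 / p)))| ^ p ≤ 1 ∧
     (2 : ℝ) ^ (-(1 / p)) + (2 : ℝ) ^ (-(1 / p)) + (2 : ℝ) ^ (-(1 / p)) -
       (-((2 : ℝ) ^ (-(1 / p)))) = 4 * (2 : ℝ) ^ (-(1 / p))) :=
  chsh_bound_p_theory_general p hp m₁ m₂ m₃ m₄ h12 h34
end

section
/- Let n ≥ 1, let λ be a real number with 0 ≤ λ ≤ 1, and let x : {1,2,3}^n → {0,1} be any function. For each measurement choice k ∈ {1,2,3}^n and each outcome A ∈ {−1,1}^n, define p_x(A|k) = (1/2^n)(1 + λ (−1)^{x(k)} Π_{i=1}^n A_i). Then: (i) p_x(A|k) ≥ 0 for all A, k; (ii) Σ_{A ∈ {−1,1}^n} p_x(A|k) = 1 for every k; and (iii) for every k, Σ_{A : Π_i A_i = (−1)^{x(k)}} p_x(A|k) = (1+λ)/2. In particular, for λ = 1 every bit is recovered with probability 1, yielding a [3^n, n, 1]-random access code. -/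
/-!
Write `σ(A) = ∏ᵢ Aᵢ` and `s = (−1)^{x(k)}`, so that `p_x(A|k) = (1 + λ s σ(A)) / 2ⁿ`.
Since `σ(A), s ∈ {±1}`, the state is nonnegative for `|λ| ≤ 1`, and the event `σ(A) = s` has
indicator `(1 + s σ(A)) / 2`. Summing over all `A` kills every term linear in `σ`, because
`∑_A σ(A) = ∏ᵢ (1 + (−1)) = 0`; what is left is `1` for the normalization and
`(1 + λ s²) / 2 = (1 + λ) / 2` for the decoding probability.
-/

open Finset

theorem ite_eq_one_add_mul_div_two {u s : ℝ} (hu : u ^ 2 = 1) (hs : s ^ 2 = 1) :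
    (if u = s then (1 : ℝ) else 0) = (1 + s * u) / 2 := by
  rcases sq_eq_sq_iff_eq_or_eq_neg.1 (hu.trans hs.symm) with rfl | rfl
  · rw [if_pos rfl, ← sq, hu]; norm_num
  · have hs0 : s ≠ 0 := by rintro rfl; norm_num at hs
    rw [if_neg (by contrapose! hs0; linarith), mul_neg, ← sq, hs]; norm_num

section SignDistribution

variable {α : Type*} [Fintype α] {σ : α → ℝ}

theorem sum_filter_eq_sum_mul_one_add_mul_div_two (hσ : ∀ a, σ a ^ 2 = 1) {s : ℝ}
    (hs : s ^ 2 = 1) (f : α → ℝ) :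
    ∑ a ∈ univ.filter (fun a => σ a = s), f a = ∑ a, f a * ((1 + s * σ a) / 2) := by
  rw [sum_filter]
  refine sum_congr rfl fun a _ => ?_
  rw [← ite_eq_one_add_mul_div_two (hσ a) hs, mul_ite, mul_one, mul_zero]

variable {p : α → ℝ} {c : ℝ}

theorem nonneg_of_eq_one_add_mul (hσ : ∀ a, σ a ^ 2 = 1) (hc : |c| ≤ 1)
    (hp : ∀ a, p a = 1 / Fintype.card α * (1 + c * σ a)) (a : α) : 0 ≤ p a := by
  have hσa := hσ a
  have hc2 : c ^ 2 ≤ 1 := by nlinarith [sq_abs c, abs_nonneg c]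
  rw [hp a]
  have : 0 ≤ 1 + c * σ a := by nlinarith
  positivity

variable [Nonempty α]

theorem sum_eq_one_of_eq_one_add_mul (hsum : ∑ a, σ a = 0)
    (hp : ∀ a, p a = 1 / Fintype.card α * (1 + c * σ a)) : ∑ a, p a = 1 := by
  simp only [hp, ← mul_sum, sum_add_distrib, sum_const, card_univ, nsmul_eq_mul, mul_one,
    hsum, mul_zero, add_zero]
  exact one_div_mul_cancel (Nat.cast_ne_zero.2 Fintype.card_ne_zero)

theorem sum_filter_eq_of_eq_one_add_mul (hσ : ∀ a, σ a ^ 2 = 1) (hsum : ∑ a, σ a = 0)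
    (hp : ∀ a, p a = 1 / Fintype.card α * (1 + c * σ a)) {s : ℝ} (hs : s ^ 2 = 1) :
    ∑ a ∈ univ.filter (fun a => σ a = s), p a = (1 + c * s) / 2 := by
  have hterm : ∀ a, p a * ((1 + s * σ a) / 2)
      = 1 / (2 * Fintype.card α) * ((1 + c * s) + (c + s) * σ a) := by
    intro a
    rw [hp a]
    linear_combination (c * s / (2 * Fintype.card α)) * hσ a
  have hN : (Fintype.card α : ℝ) ≠ 0 := Nat.cast_ne_zero.2 Fintype.card_ne_zero
  rw [sum_filter_eq_sum_mul_one_add_mul_div_two hσ hs, sum_congr rfl fun a _ => hterm a,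
    ← mul_sum, sum_add_distrib, ← mul_sum, hsum, sum_const, card_univ, nsmul_eq_mul]
  field_simp
  ring

end SignDistribution

theorem boolSign_sq (b : Bool) : (if b then (-1 : ℝ) else 1) ^ 2 = 1 := by
  cases b <;> norm_num

theorem prod_boolSign_sq {ι : Type*} [Fintype ι] (A : ι → Bool) :
    (∏ i, if A i then (-1 : ℝ) else 1) ^ 2 = 1 := by
  simp only [← prod_pow, boolSign_sq, prod_const_one]

theorem sum_prod_boolSign {ι : Type*} [Fintype ι] [DecidableEq ι] [Nonempty ι] :
    ∑ A : ι → Bool, ∏ i, (if A i then (-1 : ℝ) else 1) = 0 := by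
  refine (Fintype.prod_sum (fun (_ : ι) (b : Bool) => if b then (-1 : ℝ) else 1)).symm.trans ?_
  exact prod_eq_zero (mem_univ (Classical.arbitrary ι)) (by simp)

/-- The superstrong random access code in (`p`-)GNST: encoding a string
`x : {1,2,3}ⁿ → {0,1}` into the `n`-gbit state
`p_x(A|k) = (1/2ⁿ)(1 + λ (−1)^{x(k)} Π_i A_i)`.  Outcomes in `{−1,1}` are encoded by
`Bool` (`true ↦ −1` appearing as the sign `(−1)^{x(k)}`; outcome tuples `A` as
`Fin n → Bool` with `A_i = if A i then −1 else 1`).  The state is (i) nonnegative,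
(ii) normalized, and (iii) measuring `k` recovers the bit `x(k)` with probability
`(1+λ)/2`; in particular for `λ = 1` every bit is recovered with probability 1,
yielding a `[3ⁿ, n, 1]`-random access code. -/
theorem gnst_random_access_code
    (n : ℕ) (hn : 1 ≤ n) (lam : ℝ) (hlam0 : 0 ≤ lam) (hlam1 : lam ≤ 1)
    (x : (Fin n → Fin 3) → Bool)
    (px : (Fin n → Bool) → (Fin n → Fin 3) → ℝ)
    (hpx : ∀ A k, px A k =
      (1 / 2 ^ n) * (1 + lam * (if x k then -1 else 1) *
        ∏ i, (if A i then (-1 : ℝ) else 1))) :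
    (∀ A k, 0 ≤ px A k) ∧
    (∀ k, ∑ A : Fin n → Bool, px A k = 1) ∧
    (∀ k, ∑ A ∈ Finset.univ.filter
        (fun A : Fin n → Bool =>
          (∏ i, (if A i then (-1 : ℝ) else 1)) = (if x k then -1 else 1)),
        px A k = (1 + lam) / 2) ∧
    (lam = 1 → ∀ k, ∑ A ∈ Finset.univ.filter
        (fun A : Fin n → Bool =>
          (∏ i, (if A i then (-1 : ℝ) else 1)) = (if x k then -1 else 1)),
        px A k = 1) := by
  have : Nonempty (Fin n) := ⟨⟨0, hn⟩⟩
  have hp : ∀ k A, px A k = 1 / Fintype.card (Fin n → Bool) *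
      (1 + lam * (if x k then -1 else 1) * ∏ i, (if A i then (-1 : ℝ) else 1)) := by
    intro k A
    simp [hpx]
  have hc : ∀ k, |lam * (if x k then -1 else 1)| ≤ 1 := by
    intro k
    cases x k <;> simp [abs_of_nonneg hlam0, hlam1]
  have hdecode : ∀ k, ∑ A ∈ Finset.univ.filter
      (fun A : Fin n → Bool =>
        (∏ i, (if A i then (-1 : ℝ) else 1)) = (if x k then -1 else 1)),
      px A k = (1 + lam) / 2 := by
    intro k
    rw [sum_filter_eq_of_eq_one_add_mul prod_boolSign_sq (sum_prod_boolSign (ι := Fin n)) (hp k)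
      (boolSign_sq _), mul_assoc, ← sq, boolSign_sq, mul_one]
  refine ⟨fun A k => nonneg_of_eq_one_add_mul prod_boolSign_sq (hc k) (hp k) A,
    fun k => sum_eq_one_of_eq_one_add_mul (sum_prod_boolSign (ι := Fin n)) (hp k), hdecode, ?_⟩
  rintro rfl k
  rw [hdecode k]
  norm_num
end
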